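/- arXiv:2109.15172 — 3 statements merged into one kernel-verified Lean document; each statement's English description precedes it below -/
import Mathlib

section
/- If two metric spaces X and Y are coarsely equivalent, then they have the same coarse entropy: h_∞(X) = h_∞(Y). -/
open Filter Set Metric
open scoped ENNReal

noncomputable section

/-- `p` represents a `δ`-pseudoorbit of `f` of length `n` starting at `x₀`:
`(p 0, p 1, …, p n)` with `p 0 = x₀` and `dist (f (p i)) (p (i+1)) ≤ δ` for `i < n`.
(Only the values `p 0, …, p n` are relevant.) -/
def IsPseudoOrbit {X : Type*} [MetricSpace X] (f : X → X) (δ : ℝ) (n : ℕ) (x₀ : X)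
    (p : ℕ → X) : Prop :=
  p 0 = x₀ ∧ ∀ i < n, dist (f (p i)) (p (i + 1)) ≤ δ

/-- The distance between two pseudoorbits of length `n`:
the maximum of `dist (p i) (q i)` over `0 ≤ i ≤ n`. -/
def orbitDist {X : Type*} [MetricSpace X] (n : ℕ) (p q : ℕ → X) : ℝ :=
  (Finset.range (n + 1)).sup' (by simp) fun i => dist (p i) (q i)

/-- A family `S` of pseudoorbits of length `n` is `R`-separated if any two distinct
members are at pseudoorbit distance at least `R`. -/
def IsSepFamily {X : Type*} [MetricSpace X] (n : ℕ) (R : ℝ) (S : Set (ℕ → X)) : Prop :=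
  ∀ p ∈ S, ∀ q ∈ S, p ≠ q → R ≤ orbitDist n p q

/-- `sepCard f n R δ x₀` is `s(f,n,R,δ,x₀)`: the supremum of cardinalities of
`R`-separated sets of `δ`-pseudoorbits of `f` of length `n` starting at `x₀`. -/
def sepCard {X : Type*} [MetricSpace X] (f : X → X) (n : ℕ) (R δ : ℝ) (x₀ : X) : ℝ≥0∞ :=
  ⨆ (S : Set (ℕ → X)) (_ : ∀ p ∈ S, IsPseudoOrbit f δ n x₀ p) (_ : IsSepFamily n R S),
    (S.encard : ℝ≥0∞)

/-- Extended logarithm `[0,∞] → [0,∞]` (negative values are truncated to `0`). -/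
def elog (x : ℝ≥0∞) : ℝ≥0∞ :=
  if x = ⊤ then ⊤ else ENNReal.ofReal (Real.log x.toReal)

/-- The coarse entropy of `f : X → X` computed at the basepoint `x₀`:
`h_∞(f) = lim_{δ→∞} lim_{R→∞} limsup_{n→∞} (1/n) log s(f,n,R,δ,x₀)`.
Since `s` is nondecreasing in `δ` and nonincreasing in `R`, the limits in `δ` and `R`
are the supremum over `δ > 0` and the infimum over `R > 0`, respectively. -/
def coarseEntropyAt {X : Type*} [MetricSpace X] (f : X → X) (x₀ : X) : ℝ≥0∞ :=
  ⨆ (δ : ℝ) (_ : 0 < δ), ⨅ (R : ℝ) (_ : 0 < R),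
    Filter.atTop.limsup fun n : ℕ => elog (sepCard f n R δ x₀) / (n : ℝ≥0∞)

end

/-- `f : X → Y` is a coarse embedding: there are nondecreasing control functions
`ρ₋, ρ₊ : ℝ → ℝ` with `ρ₋ → ∞` and
`ρ₋(d(x,x')) ≤ d(f x, f x') ≤ ρ₊(d(x,x'))` for all `x, x'`. -/
def IsCoarseEmbedding {X Y : Type*} [MetricSpace X] [MetricSpace Y] (f : X → Y) : Prop :=
  ∃ ρminus ρplus : ℝ → ℝ, Monotone ρminus ∧ Monotone ρplus ∧
    Filter.Tendsto ρminus Filter.atTop Filter.atTop ∧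
    ∀ x x' : X, ρminus (dist x x') ≤ dist (f x) (f x') ∧
      dist (f x) (f x') ≤ ρplus (dist x x')

/-- `f : X → Y` is a coarse equivalence: a coarse embedding with coarsely dense image. -/
def IsCoarseEquiv {X Y : Type*} [MetricSpace X] [MetricSpace Y] (f : X → Y) : Prop :=
  IsCoarseEmbedding f ∧ ∃ A : ℝ, 0 ≤ A ∧ ∀ y : Y, ∃ x : X, dist y (f x) < A

/-!
A map `g : X → Y` which is bornologous (bounded jumps go to bounded jumps) and effectively
proper (large distances go to large distances) sends `δ`-paths to `δ'`-paths and `R`-separated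
families to `R'`-separated ones, injectively; so `s(n, R, δ) ≤ s(n, R', δ')` for all `n`,
with `δ'` depending only on `δ` and `R` only on `R'`, whence `h_∞(X) ≤ h_∞(Y)`. A coarse
equivalence is such a map, and so is any coarse inverse of it, obtained by choosing `g y` with
`f (g y)` near `y`.
-/

theorem abs_dist_sub_dist_lt_of_dist_lt {α : Type*} [PseudoMetricSpace α] {x x' y y' : α}
    {A : ℝ} (hx : dist x y < A) (hx' : dist x' y' < A) : |dist x x' - dist y y'| < 2 * A := by
  have := dist_dist_dist_le x x' y y'
  rw [Real.dist_eq] at this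
  linarith

section

variable {X Y : Type*} [MetricSpace X] [MetricSpace Y]

def IsBornologous (g : X → Y) : Prop :=
  ∀ δ : ℝ, ∃ δ' : ℝ, ∀ x x' : X, dist x x' ≤ δ → dist (g x) (g x') ≤ δ'

def IsEffectivelyProper (g : X → Y) : Prop :=
  ∀ R' : ℝ, ∃ R : ℝ, ∀ x x' : X, R ≤ dist x x' → R' ≤ dist (g x) (g x')

theorem elog_mono : Monotone elog := by
  intro a b hab
  unfold elog
  by_cases hb : b = ⊤
  · simp [hb]
  have ha : a ≠ ⊤ := ne_top_of_le_ne_top hb hab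
  rw [if_neg ha, if_neg hb]
  rcases le_or_gt a.toReal 1 with h1 | h1
  · rw [ENNReal.ofReal_eq_zero.mpr (Real.log_nonpos ENNReal.toReal_nonneg h1)]
    exact zero_le
  · exact ENNReal.ofReal_le_ofReal
      (Real.log_le_log (one_pos.trans h1) (ENNReal.toReal_mono hb hab))

theorem le_orbitDist_iff {n : ℕ} {p q : ℕ → X} {R : ℝ} :
    R ≤ orbitDist n p q ↔ ∃ i ≤ n, R ≤ dist (p i) (q i) := by
  simp [orbitDist, Finset.le_sup'_iff]

def rebasedMap (g : X → Y) (y₀ : Y) (p : ℕ → X) : ℕ → Y :=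
  Function.update (g ∘ p) 0 y₀

theorem isPseudoOrbit_rebasedMap {g : X → Y} {x₀ : X} {y₀ : Y} {δ δ' : ℝ} {n : ℕ}
    {p : ℕ → X} (hp : IsPseudoOrbit id δ n x₀ p)
    (hbase : ∀ x, dist x₀ x ≤ δ → dist y₀ (g x) ≤ δ')
    (hstep : ∀ x x', dist x x' ≤ δ → dist (g x) (g x') ≤ δ') :
    IsPseudoOrbit id δ' n y₀ (rebasedMap g y₀ p) := by
  obtain ⟨hp0, hpstep⟩ := hp
  refine ⟨by simp [rebasedMap], fun i hi => ?_⟩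
  rcases Nat.eq_zero_or_pos i with rfl | hipos
  · simpa [rebasedMap] using hbase (p 1) (by simpa [hp0] using hpstep 0 hi)
  · simpa [rebasedMap, hipos.ne'] using hstep _ _ (hpstep i hi)

/-- Since the paths start at a common point, separation at `R > 0` happens away from the initial
index, where the rebasing has no effect. -/
theorem exists_le_dist_rebasedMap {g : X → Y} {x₀ : X} {y₀ : Y} {R R' : ℝ} {n : ℕ}
    {p q : ℕ → X} (hR : 0 < R) (hp0 : p 0 = x₀) (hq0 : q 0 = x₀)
    (hsep : ∀ x x', R ≤ dist x x' → R' ≤ dist (g x) (g x')) (hpq : R ≤ orbitDist n p q) :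
    ∃ i ≤ n, R' ≤ dist (rebasedMap g y₀ p i) (rebasedMap g y₀ q i) := by
  obtain ⟨i, hin, hi⟩ := le_orbitDist_iff.mp hpq
  have hi0 : i ≠ 0 := by
    rintro rfl
    rw [hp0, hq0, dist_self] at hi
    exact hi.not_gt hR
  exact ⟨i, hin, by simpa [rebasedMap, hi0] using hsep _ _ hi⟩

theorem sepCard_id_le_of_map (g : X → Y) (x₀ : X) (y₀ : Y) {δ δ' R R' : ℝ}
    (hR : 0 < R) (hR' : 0 < R')
    (hbase : ∀ x, dist x₀ x ≤ δ → dist y₀ (g x) ≤ δ')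
    (hstep : ∀ x x', dist x x' ≤ δ → dist (g x) (g x') ≤ δ')
    (hsep : ∀ x x', R ≤ dist x x' → R' ≤ dist (g x) (g x')) (n : ℕ) :
    sepCard (id : X → X) n R δ x₀ ≤ sepCard (id : Y → Y) n R' δ' y₀ := by
  refine iSup_le fun S => iSup₂_le fun hS hSsep => ?_
  have hsep' : ∀ p ∈ S, ∀ q ∈ S, p ≠ q →
      ∃ i ≤ n, R' ≤ dist (rebasedMap g y₀ p i) (rebasedMap g y₀ q i) :=
    fun p hp q hq hpq => exists_le_dist_rebasedMap hR (hS p hp).1 (hS q hq).1 hsep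
      (hSsep p hp q hq hpq)
  have hinj : S.InjOn (rebasedMap g y₀) := by
    intro p hp q hq hpq
    by_contra hne
    obtain ⟨i, -, hi⟩ := hsep' p hp q hq hne
    rw [hpq, dist_self] at hi
    exact hi.not_gt hR'
  have himage_orbit : ∀ q ∈ rebasedMap g y₀ '' S, IsPseudoOrbit id δ' n y₀ q := by
    rintro _ ⟨p, hp, rfl⟩
    exact isPseudoOrbit_rebasedMap (hS p hp) hbase hstep
  have himage_sep : IsSepFamily n R' (rebasedMap g y₀ '' S) := by
    rintro _ ⟨p, hp, rfl⟩ _ ⟨q, hq, rfl⟩ hne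
    exact le_orbitDist_iff.mpr (hsep' p hp q hq fun h => hne (h ▸ rfl))
  rw [← hinj.encard_image]
  exact le_iSup_of_le (rebasedMap g y₀ '' S) (le_iSup₂_of_le himage_orbit himage_sep le_rfl)

theorem coarseEntropyAt_id_le_of_sepCard_le (x₀ : X) (y₀ : Y)
    (H : ∀ δ > 0, ∃ δ' > 0, ∀ R' > 0, ∃ R > 0,
      ∀ n, sepCard (id : X → X) n R δ x₀ ≤ sepCard (id : Y → Y) n R' δ' y₀) :
    coarseEntropyAt (id : X → X) x₀ ≤ coarseEntropyAt (id : Y → Y) y₀ := by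
  refine iSup₂_le fun δ hδ => ?_
  obtain ⟨δ', hδ', H⟩ := H δ hδ
  refine le_iSup₂_of_le δ' hδ' (le_iInf₂ fun R' hR' => ?_)
  obtain ⟨R, hR, hle⟩ := H R' hR'
  refine iInf₂_le_of_le R hR (limsup_le_limsup (.of_forall fun n => ?_))
  exact ENNReal.div_le_div_right (elog_mono (hle n)) _

theorem coarseEntropyAt_id_le_of_isBornologous_of_isEffectivelyProper {g : X → Y}
    (hb : IsBornologous g) (hp : IsEffectivelyProper g) (x₀ : X) (y₀ : Y) :
    coarseEntropyAt (id : X → X) x₀ ≤ coarseEntropyAt (id : Y → Y) y₀ := by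
  refine coarseEntropyAt_id_le_of_sepCard_le x₀ y₀ fun δ _ => ?_
  obtain ⟨δ', hδ'⟩ := hb δ
  set δ'' := dist y₀ (g x₀) + max δ' 0 + 1
  have hstep : ∀ x x', dist x x' ≤ δ → dist (g x) (g x') ≤ δ'' := fun x x' h => by
    linarith [hδ' x x' h, dist_nonneg (x := y₀) (y := g x₀), le_max_left δ' 0]
  have hbase : ∀ x, dist x₀ x ≤ δ → dist y₀ (g x) ≤ δ'' := fun x h =>
    calc dist y₀ (g x) ≤ dist y₀ (g x₀) + dist (g x₀) (g x) := dist_triangle _ _ _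
      _ ≤ dist y₀ (g x₀) + max δ' 0 + 1 := by linarith [hδ' x₀ x h, le_max_left δ' 0]
  refine ⟨δ'', by positivity, fun R' hR' => ?_⟩
  obtain ⟨R, hR⟩ := hp R'
  exact ⟨max R 1, by positivity, sepCard_id_le_of_map g x₀ y₀ (by positivity) hR' hbase hstep
    fun x x' h => hR x x' ((le_max_left R 1).trans h)⟩

end

namespace IsCoarseEmbedding

variable {X Y : Type*} [MetricSpace X] [MetricSpace Y] {f : X → Y}

theorem isBornologous (hf : IsCoarseEmbedding f) : IsBornologous f := by
  obtain ⟨_, ρplus, -, hmono, -, hbound⟩ := hf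
  exact fun δ => ⟨ρplus δ, fun x x' h => (hbound x x').2.trans (hmono h)⟩

theorem isEffectivelyProper (hf : IsCoarseEmbedding f) : IsEffectivelyProper f := by
  obtain ⟨ρminus, _, -, -, htend, hbound⟩ := hf
  intro R'
  obtain ⟨R, hR⟩ := (tendsto_atTop.mp htend R').exists_forall_of_atTop
  exact ⟨R, fun x x' h => (hR _ h).trans (hbound x x').1⟩

variable {g : Y → X} {A : ℝ}

theorem isBornologous_of_dist_lt (hf : IsCoarseEmbedding f)
    (hg : ∀ y, dist y (f (g y)) < A) : IsBornologous g := by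
  obtain ⟨ρminus, _, -, -, htend, hbound⟩ := hf
  intro δ
  obtain ⟨C, hC⟩ := (tendsto_atTop.mp htend (δ + 2 * A)).exists_forall_of_atTop
  refine ⟨C, fun y y' hyy' => le_of_not_gt fun hlt => ?_⟩
  have hfar := (hC _ hlt.le).trans (hbound (g y) (g y')).1
  have hclose := (abs_lt.mp (abs_dist_sub_dist_lt_of_dist_lt (hg y) (hg y'))).1
  linarith

theorem isEffectivelyProper_of_dist_lt (hf : IsCoarseEmbedding f)
    (hg : ∀ y, dist y (f (g y)) < A) : IsEffectivelyProper g := by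
  obtain ⟨_, ρplus, -, hmono, -, hbound⟩ := hf
  refine fun R' => ⟨ρplus R' + 2 * A, fun y y' hyy' => le_of_not_gt fun hlt => ?_⟩
  have hnear := (hbound (g y) (g y')).2.trans (hmono hlt.le)
  linarith [(abs_lt.mp (abs_dist_sub_dist_lt_of_dist_lt (hg y) (hg y'))).2]

end IsCoarseEmbedding

/-- Coarsely equivalent metric spaces have the same coarse entropy
(the coarse entropy of a space is that of its identity map; it is independent of
the basepoint). -/
theorem coarseEntropy_eq_of_coarseEquiv {X Y : Type*} [MetricSpace X] [MetricSpace Y]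
    (f : X → Y) (hf : IsCoarseEquiv f) (x₀ : X) (y₀ : Y) :
    coarseEntropyAt (id : X → X) x₀ = coarseEntropyAt (id : Y → Y) y₀ := by
  obtain ⟨hemb, A, -, hdense⟩ := hf
  choose g hg using hdense
  exact le_antisymm
    (coarseEntropyAt_id_le_of_isBornologous_of_isEffectivelyProper hemb.isBornologous
      hemb.isEffectivelyProper x₀ y₀)
    (coarseEntropyAt_id_le_of_isBornologous_of_isEffectivelyProper
      (hemb.isBornologous_of_dist_lt hg) (hemb.isEffectivelyProper_of_dist_lt hg) y₀ x₀)
end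

section
/- The coarse entropy of every ultrametric space is zero: if the metric d on X satisfies d(x,z) ≤ max(d(x,y), d(y,z)) for all x, y, z ∈ X, then h_∞(X) = 0. -/
open Filter Set Metric
open scoped ENNReal

/-!
In an ultrametric space every point of a closed ball is a centre of it, so a `δ`-path of the
identity never leaves the closed `δ`-ball around its starting point. Two `δ`-paths from `x₀` are
therefore within `δ` of each other at all times, an `R`-separated family of them with `R > δ` has
at most one member, and the logarithm of `s(n, R, δ, x₀) ≤ 1` vanishes for every `n`.
-/

theorem elog_eq_zero_of_le_one {x : ℝ≥0∞} (hx : x ≤ 1) : elog x = 0 := by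
  have hx_ne_top : x ≠ ⊤ := ne_top_of_le_ne_top ENNReal.one_ne_top hx
  rw [elog, if_neg hx_ne_top, ENNReal.ofReal_eq_zero]
  exact Real.log_nonpos ENNReal.toReal_nonneg (ENNReal.toReal_le_of_le_ofReal zero_le_one
    (by simpa using hx))

section Ultrametric

variable {X : Type*} [MetricSpace X] [IsUltrametricDist X] {δ : ℝ} {n : ℕ} {x₀ : X}
  {p q : ℕ → X}

theorem IsPseudoOrbit.mem_closedBall_of_id (hδ : 0 ≤ δ) (hp : IsPseudoOrbit id δ n x₀ p)
    {i : ℕ} (hi : i ≤ n) : p i ∈ closedBall x₀ δ := by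
  induction i with
  | zero => simpa [hp.1] using hδ
  | succ i ih =>
    rw [IsUltrametricDist.closedBall_eq_of_mem (ih (by omega))]
    exact mem_closedBall'.2 (hp.2 i hi)

theorem IsPseudoOrbit.orbitDist_le_of_id (hδ : 0 ≤ δ) (hp : IsPseudoOrbit id δ n x₀ p)
    (hq : IsPseudoOrbit id δ n x₀ q) : orbitDist n p q ≤ δ := by
  refine Finset.sup'_le _ _ fun i hi => ?_
  have hin : i ≤ n := Nat.lt_succ_iff.mp (Finset.mem_range.mp hi)
  exact (dist_triangle_max _ x₀ _).trans (max_le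
    (mem_closedBall.1 (hp.mem_closedBall_of_id hδ hin))
    (mem_closedBall'.1 (hq.mem_closedBall_of_id hδ hin)))

theorem sepCard_id_le_one {R : ℝ} (hδ : 0 ≤ δ) (hR : δ < R) : sepCard id n R δ x₀ ≤ 1 := by
  refine iSup₂_le fun S hS => iSup_le fun hsep => ?_
  have hsubsingleton : ∀ p q, p ∈ S → q ∈ S → p = q := fun p q hp hq => by
    by_contra hpq
    have := hsep p hp q hq hpq
    have := (hS p hp).orbitDist_le_of_id hδ (hS q hq)
    linarith
  exact_mod_cast Set.encard_le_one_iff.2 hsubsingleton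

end Ultrametric

/-- Every ultrametric space has zero coarse entropy. -/
theorem coarseEntropy_zero_of_ultrametric {X : Type*} [MetricSpace X]
    (h : ∀ x y z : X, dist x z ≤ max (dist x y) (dist y z)) (x₀ : X) :
    coarseEntropyAt (id : X → X) x₀ = 0 := by
  have : IsUltrametricDist X := ⟨h⟩
  refine le_antisymm (iSup₂_le fun δ hδ => iInf₂_le_of_le (δ + 1) (by linarith) ?_) zero_le
  have hzero : ∀ n : ℕ, elog (sepCard id n (δ + 1) δ x₀) / n = 0 := fun n => by
    rw [elog_eq_zero_of_le_one (sepCard_id_le_one hδ.le (lt_add_one δ)), ENNReal.zero_div]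
  simp only [hzero, limsup_const, le_refl]
end

section
/- Let X be a quasigeodesic metric space (for example, a connected graph with its path metric) that is not coarsely equivalent to any metric space with bounded geometry. Then the coarse entropy of X is infinite: h_∞(X) = ∞. -/
open Filter Set Metric
open scoped ENNReal

/-- A metric space `X` is quasigeodesic. -/
def IsQuasiGeodesicSpace (X : Type*) [MetricSpace X] : Prop :=
  ∃ C A : ℝ, 1 ≤ C ∧ 0 ≤ A ∧ ∀ x x' : X, ∃ p : ℝ → X,
    p 0 = x ∧ p (dist x x') = x' ∧
    ∀ s ∈ Set.Icc (0 : ℝ) (dist x x'), ∀ t ∈ Set.Icc (0 : ℝ) (dist x x'),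
      C⁻¹ * |s - t| - A ≤ dist (p s) (p t) ∧ dist (p s) (p t) ≤ C * |s - t| + A

/-- A metric space has bounded geometry if for every radius `r > 0` there is a uniform
bound `C(r) ∈ ℕ` on the cardinalities of closed balls of radius `r`. -/
def HasBoundedGeometry (X : Type*) [MetricSpace X] : Prop :=
  ∀ r : ℝ, 0 < r → ∃ C : ℕ, ∀ x : X, (Metric.closedBall x r).encard ≤ C

/-!
If for some `R > 0` the `R`-separated subsets of `r`-balls had bounded size for every `r`, a
maximal `R`-separated net of `X` would be a space of bounded geometry coarsely equivalent to `X`.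
So for every `R > 0` there is an `r` such that some `r`-ball contains an `R`-separated set `F` of
any prescribed size `N`. Quasigeodesicity turns `X` into a space where two points at distance
`≤ k` are joined by a `δ`-chain of `k` steps, so a `δ`-chain from `x₀` can visit an arbitrary
point of `F` every `L ≈ 2r` steps. This gives `N ^ (n / 2L)` pairwise `R`-separated `δ`-paths of
length `n`, hence entropy at least `log N / 2L` for every `N`.
-/

section BoundedGeometry

variable {X : Type u} [MetricSpace X]

def HasBoundedGeometryAt (ε : ℝ) (X : Type*) [MetricSpace X] : Prop :=
  ∀ r : ℝ, 0 < r → ∃ N : ℕ, ∀ (x : X) (s : Set X), s ⊆ closedBall x r →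
    s.Pairwise (ε ≤ dist · ·) → s.encard ≤ N

theorem exists_maximal_pairwise {α : Type*} (r : α → α → Prop) :
    ∃ s : Set α, Maximal (fun s ↦ s.Pairwise r) s :=
  zorn_subset {s | s.Pairwise r} fun c hc hchain ↦
    ⟨⋃₀ c, (pairwise_sUnion hchain.directedOn).2 hc, fun _ ↦ subset_sUnion_of_mem⟩

theorem Maximal.exists_dist_lt {ε : ℝ} (hε : 0 < ε) {s : Set X}
    (hs : Maximal (fun s ↦ s.Pairwise (ε ≤ dist · ·)) s) (x : X) : ∃ y ∈ s, dist x y < ε := by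
  by_contra! hfar
  have hx : x ∈ s := hs.mem_of_prop_insert <| pairwise_insert.2
    ⟨hs.prop, fun y hy _ ↦ ⟨hfar y hy, dist_comm x y ▸ hfar y hy⟩⟩
  simpa using (hfar x hx).trans_lt' hε

theorem isCoarseEquiv_of_abs_dist_sub_le {Y : Type*} [MetricSpace Y] {f : X → Y} {c A : ℝ}
    (hf : ∀ x x', |dist (f x) (f x') - dist x x'| ≤ c) (hA : 0 ≤ A)
    (hdense : ∀ y, ∃ x, dist y (f x) < A) : IsCoarseEquiv f := by
  refine ⟨⟨(· - c), (· + c), fun _ _ h ↦ by simpa, fun _ _ h ↦ by simpa,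
    tendsto_atTop_add_const_right _ _ tendsto_id, fun x x' ↦ ?_⟩, A, hA, hdense⟩
  have := abs_le.1 (hf x x')
  constructor <;> linarith

theorem HasBoundedGeometryAt.exists_coarseEquiv {ε : ℝ} (hb : HasBoundedGeometryAt ε X)
    (hε : 0 < ε) :
    ∃ (Y : Type u) (_ : MetricSpace Y), HasBoundedGeometry Y ∧ ∃ f : X → Y, IsCoarseEquiv f := by
  obtain ⟨s, hs⟩ := exists_maximal_pairwise (ε ≤ dist · · : X → X → Prop)
  choose g hgs hg using hs.exists_dist_lt hε
  refine ⟨s, inferInstance, fun r hr ↦ ?_, fun x ↦ ⟨g x, hgs x⟩, ?_⟩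
  · obtain ⟨N, hN⟩ := hb r hr
    refine ⟨N, fun y ↦ ?_⟩
    rw [← Subtype.val_injective.encard_image]
    exact hN y _ (image_subset_iff.2 fun _ hz ↦ hz)
      (hs.prop.mono (image_subset_iff.2 fun z _ ↦ z.2))
  · refine isCoarseEquiv_of_abs_dist_sub_le (c := 2 * ε) (fun x x' ↦ ?_) hε.le
      fun y ↦ ⟨y, hg y⟩
    have h₁ := dist_triangle4 (g x) x x' (g x')
    have h₂ := dist_triangle4 x (g x) (g x') x'
    rw [abs_le, Subtype.dist_eq]
    constructor <;> linarith [hg x, hg x', dist_comm x (g x), dist_comm x' (g x')]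

theorem exists_large_finset_of_not_hasBoundedGeometryAt {ε : ℝ}
    (h : ¬ HasBoundedGeometryAt ε X) :
    ∃ r > 0, ∀ N : ℕ, ∃ (y : X) (F : Finset X), ↑F ⊆ closedBall y r ∧
      (F : Set X).Pairwise (ε ≤ dist · ·) ∧ N ≤ F.card := by
  unfold HasBoundedGeometryAt at h
  push Not at h
  obtain ⟨r, hr, hbig⟩ := h
  refine ⟨r, hr, fun N ↦ ?_⟩
  obtain ⟨y, s, hsy, hs, hNs⟩ := hbig N
  obtain ⟨t, hts, ht⟩ := exists_subset_encard_eq hNs.le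
  obtain ⟨F, rfl⟩ := (finite_of_encard_eq_coe ht).exists_finset_coe
  rw [encard_coe_eq_coe_finsetCard, Nat.cast_inj] at ht
  exact ⟨y, F, hts.trans hsy, hs.mono hts, ht.ge⟩

end BoundedGeometry

section Chains

variable {X : Type*} [MetricSpace X] {δ : ℝ}

def IsChainGeodesic (δ : ℝ) (X : Type*) [MetricSpace X] : Prop :=
  ∀ (x x' : X) (k : ℕ), dist x x' ≤ k →
    ∃ q : ℕ → X, q 0 = x ∧ q k = x' ∧ ∀ i < k, dist (q i) (q (i + 1)) ≤ δ

theorem IsQuasiGeodesicSpace.exists_isChainGeodesic (hX : IsQuasiGeodesicSpace X) :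
    ∃ δ > 0, IsChainGeodesic δ X := by
  obtain ⟨C, A, hC, hA, hq⟩ := hX
  refine ⟨C + A, by linarith, fun x x' k hk ↦ ?_⟩
  obtain ⟨p, hp0, hpd, hp⟩ := hq x x'
  have hd := dist_nonneg (x := x) (y := x')
  have hmem (i : ℕ) : min (i : ℝ) (dist x x') ∈ Icc 0 (dist x x') :=
    ⟨le_min i.cast_nonneg hd, min_le_right _ _⟩
  refine ⟨fun i ↦ p (min i (dist x x')), by simpa [hd], by simpa [hk], fun i _ ↦ ?_⟩
  have hstep : |min ((i + 1 : ℕ) : ℝ) (dist x x') - min (i : ℝ) (dist x x')| ≤ 1 := by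
    simpa using abs_min_sub_min_le_max ((i : ℝ) + 1) (dist x x') i (dist x x')
  calc dist (p (min i (dist x x'))) (p (min (i + 1 : ℕ) (dist x x')))
      ≤ C * |min ((i + 1 : ℕ) : ℝ) (dist x x') - min (i : ℝ) (dist x x')| + A := by
        rw [abs_sub_comm]; exact (hp _ (hmem i) _ (hmem (i + 1))).2
    _ ≤ C + A := by nlinarith

theorem IsChainGeodesic.exists_chain_through (hX : IsChainGeodesic δ X) {L : ℕ} (hL : 0 < L)
    (z : ℕ → X) (hz : ∀ j, dist (z j) (z (j + 1)) ≤ L) :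
    ∃ Q : ℕ → X, (∀ i, dist (Q i) (Q (i + 1)) ≤ δ) ∧ ∀ j, Q (j * L) = z j := by
  choose seg hseg0 hsegL hseg using fun j ↦ hX (z j) (z (j + 1)) L (hz j)
  have hseg_succ (i : ℕ) : seg ((i + 1) / L) ((i + 1) % L) = seg (i / L) (i % L + 1) := by
    have := Nat.mod_add_div i L
    rcases Nat.lt_or_eq_of_le (Nat.mod_lt i hL) with h | h
    · obtain ⟨hdiv, hmod⟩ := (Nat.div_mod_unique (a := i + 1) (d := i / L) hL).2 ⟨by omega, h⟩
      rw [hdiv, hmod]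
    · obtain ⟨hdiv, hmod⟩ := (Nat.div_mod_unique (a := i + 1) (d := i / L + 1) (c := 0) hL).2
        ⟨by rw [mul_add]; omega, hL⟩
      rw [hdiv, hmod, hseg0, show i % L + 1 = L from h, hsegL]
  refine ⟨fun i ↦ seg (i / L) (i % L), fun i ↦ ?_, fun j ↦ ?_⟩
  · simpa only [hseg_succ] using hseg _ _ (Nat.mod_lt i hL)
  · simp only [Nat.mul_div_cancel _ hL, Nat.mul_mod_left, hseg0]

theorem IsChainGeodesic.exists_chain_from (hX : IsChainGeodesic δ X) {Q : ℕ → X}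
    (hQ : ∀ i, dist (Q i) (Q (i + 1)) ≤ δ) {x₀ : X} {m : ℕ} (hm : dist x₀ (Q 0) ≤ m) :
    ∃ P : ℕ → X, P 0 = x₀ ∧ (∀ i, dist (P i) (P (i + 1)) ≤ δ) ∧ ∀ i, P (m + i) = Q i := by
  obtain ⟨c, hc0, hcm, hc⟩ := hX x₀ (Q 0) m hm
  refine ⟨fun i ↦ if i ≤ m then c i else Q (i - m), by simpa, fun i ↦ ?_, fun i ↦ ?_⟩
  · rcases lt_trichotomy i m with h | rfl | h
    · simpa [h.le, Nat.succ_le_of_lt h] using hc i h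
    · simpa [hcm] using hQ 0
    · simpa [h.not_ge, (h.trans (Nat.lt_succ_self i)).not_ge, Nat.sub_add_comm h.le] using
        hQ (i - m)
  · rcases i.eq_zero_or_pos with rfl | h
    · simp [hcm]
    · simp [h.ne']

end Chains

section Entropy

variable {X : Type*} [MetricSpace X]

theorem le_orbitDist {n i : ℕ} (hi : i ≤ n) (p q : ℕ → X) :
    dist (p i) (q i) ≤ orbitDist n p q :=
  Finset.le_sup' (fun i ↦ dist (p i) (q i)) (Finset.mem_range.2 (Nat.lt_succ_of_le hi))

theorem encard_le_sepCard {f : X → X} {n : ℕ} {R δ : ℝ} {x₀ : X} {S : Set (ℕ → X)}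
    (hS : ∀ p ∈ S, IsPseudoOrbit f δ n x₀ p) (hsep : IsSepFamily n R S) :
    (S.encard : ℝ≥0∞) ≤ sepCard f n R δ x₀ :=
  le_iSup_of_le S <| le_iSup_of_le hS <| le_iSup_of_le hsep le_rfl

theorem IsChainGeodesic.card_pow_le_sepCard {δ : ℝ} (hX : IsChainGeodesic δ X) (x₀ y : X)
    {r R : ℝ} {F : Finset X} (hr : 0 ≤ r) (hF : ↑F ⊆ closedBall y r)
    (hFsep : (F : Set X).Pairwise (R ≤ dist · ·)) {L m b n : ℕ} (hL : 0 < L) (hrL : 2 * r ≤ L)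
    (hm : dist x₀ y + r ≤ m) (hn : m + b * L ≤ n) :
    (F.card ^ b : ℝ≥0∞) ≤ sepCard id n R δ x₀ := by
  let z (w : Fin b → F) (j : ℕ) : X := if h : j < b then w ⟨j, h⟩ else y
  have hz_mem (w : Fin b → F) (j : ℕ) : dist (z w j) y ≤ r := by
    unfold z; split_ifs
    · exact hF (w _).2
    · simpa using hr
  have hpath (w : Fin b → F) : ∃ P : ℕ → X, P 0 = x₀ ∧ (∀ i, dist (P i) (P (i + 1)) ≤ δ) ∧
      ∀ j : Fin b, P (m + j * L) = w j := by
    obtain ⟨Q, hQ, hQz⟩ := hX.exists_chain_through hL (z w) fun j ↦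
      (dist_triangle_right _ _ y).trans (by linarith [hz_mem w j, hz_mem w (j + 1)])
    have hQ0 : dist (Q 0) y ≤ r := by rw [← zero_mul L, hQz]; exact hz_mem w 0
    obtain ⟨P, hP0, hP, hPQ⟩ := hX.exists_chain_from hQ (m := m) <|
      (dist_triangle x₀ y _).trans (by linarith [dist_comm y (Q 0)])
    exact ⟨P, hP0, hP, fun j ↦ by simp [hPQ, hQz, z]⟩
  choose P hP0 hP hPw using hpath
  have hPinj : Function.Injective P := fun w w' h ↦
    funext fun j ↦ Subtype.ext <| by rw [← hPw, ← hPw, h]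
  have hsep : IsSepFamily n R (range P) := by
    rintro _ ⟨w, rfl⟩ _ ⟨w', rfl⟩ hne
    obtain ⟨j, hj⟩ := Function.ne_iff.1 (ne_of_apply_ne P hne)
    have hjn : m + j * L ≤ n := by nlinarith [j.2]
    calc R ≤ dist (P w (m + j * L)) (P w' (m + j * L)) := by
          rw [hPw, hPw]; exact hFsep (w j).2 (w' j).2 (Subtype.coe_ne_coe.2 hj)
      _ ≤ orbitDist n (P w) (P w') := le_orbitDist hjn _ _
  calc (F.card ^ b : ℝ≥0∞) = (ENat.card (Fin b → F) : ℝ≥0∞) := by simp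
    _ ≤ ((range P).encard : ℝ≥0∞) := by exact_mod_cast hPinj.encard_range
    _ ≤ sepCard id n R δ x₀ :=
      encard_le_sepCard (by rintro _ ⟨w, rfl⟩; exact ⟨hP0 w, fun i _ ↦ hP w i⟩) hsep

theorem ofReal_log_le_elog {a : ℝ} (ha : 0 < a) {x : ℝ≥0∞} (h : ENNReal.ofReal a ≤ x) :
    ENNReal.ofReal (Real.log a) ≤ elog x := by
  unfold elog
  split_ifs with hx
  · exact le_top
  · exact ENNReal.ofReal_le_ofReal <|
      Real.log_le_log ha ((ENNReal.ofReal_le_iff_le_toReal hx).1 h)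

theorem ofReal_log_div_le_elog_div {N b n : ℕ} {c : ℝ} (hc : 0 < c) (hn₀ : 0 < n)
    (hn : (n : ℝ) ≤ c * b) {x : ℝ≥0∞} (hx : (N : ℝ≥0∞) ^ b ≤ x) :
    ENNReal.ofReal (Real.log N / c) ≤ elog x / n := by
  rcases N.eq_zero_or_pos with rfl | hN
  · simp
  have hlog : 0 ≤ Real.log N / c := div_nonneg (Real.log_natCast_nonneg N) hc.le
  rw [ENNReal.le_div_iff_mul_le (Or.inl (by simpa using hn₀.ne')) (Or.inl (by simp))]
  calc ENNReal.ofReal (Real.log N / c) * n = ENNReal.ofReal (Real.log N / c * n) := by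
        rw [ENNReal.ofReal_mul hlog, ENNReal.ofReal_natCast]
    _ ≤ ENNReal.ofReal (Real.log ((N : ℝ) ^ b)) := by
        refine ENNReal.ofReal_le_ofReal ?_
        rw [Real.log_pow]
        calc Real.log N / c * n ≤ Real.log N / c * (c * b) := by gcongr
          _ = b * Real.log N := by field_simp
    _ ≤ elog x := ofReal_log_le_elog (by positivity) <| by
        rwa [ENNReal.ofReal_pow (Nat.cast_nonneg N), ENNReal.ofReal_natCast]

theorem eq_top_of_forall_ofReal_log_div_le {c : ℝ} (hc : 0 < c) {x : ℝ≥0∞}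
    (h : ∀ N : ℕ, ENNReal.ofReal (Real.log N / c) ≤ x) : x = ⊤ :=
  top_le_iff.1 <| le_of_tendsto' (ENNReal.tendsto_ofReal_atTop.comp <|
    (Real.tendsto_log_atTop.comp tendsto_natCast_atTop_atTop).atTop_div_const hc) h

theorem IsChainGeodesic.limsup_log_sepCard_eq_top {δ : ℝ} (hX : IsChainGeodesic δ X) (x₀ : X)
    {R : ℝ} (hR : ¬ HasBoundedGeometryAt R X) :
    atTop.limsup (fun n : ℕ ↦ elog (sepCard id n R δ x₀) / n) = ⊤ := by
  obtain ⟨r, hr, hbig⟩ := exists_large_finset_of_not_hasBoundedGeometryAt hR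
  set L := ⌈2 * r⌉₊ + 1
  have hL : 0 < L := Nat.succ_pos _
  have hrL : 2 * r ≤ L := by push_cast [L]; linarith [Nat.le_ceil (2 * r)]
  refine eq_top_of_forall_ofReal_log_div_le (c := 2 * L) (by positivity) fun N ↦ ?_
  obtain ⟨y, F, hF, hFsep, hNF⟩ := hbig N
  set m := ⌈dist x₀ y + r⌉₊
  refine le_limsup_of_frequently_le' (Eventually.frequently ?_)
  filter_upwards [eventually_ge_atTop (2 * (m + L))] with n hn
  set b := (n - m) / L
  have hbL : b * L ≤ n - m := Nat.div_mul_le_self _ _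
  have hLb : n - m < b * L + L := Nat.lt_div_mul_add hL
  have hcard := hX.card_pow_le_sepCard x₀ y hr.le hF hFsep hL hrL (Nat.le_ceil _)
    (b := b) (n := n) (by omega)
  have hnb : n ≤ 2 * L * b := by linarith [(by omega : n ≤ 2 * (b * L))]
  refine ofReal_log_div_le_elog_div (by positivity) (by omega) (by exact_mod_cast hnb)
    (le_trans ?_ hcard)
  gcongr

end Entropy

/-- A quasigeodesic metric space that is not coarsely equivalent to any
metric space with bounded geometry has infinite coarse entropy. -/
theorem coarseEntropy_top_of_not_boundedGeometry {X : Type u} [MetricSpace X]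
    (hqg : IsQuasiGeodesicSpace X)
    (h : ¬ ∃ (Y : Type u) (mY : MetricSpace Y), @HasBoundedGeometry Y mY ∧
      ∃ f : X → Y, @IsCoarseEquiv X Y _ mY f)
    (x₀ : X) :
    coarseEntropyAt (id : X → X) x₀ = ⊤ := by
  obtain ⟨δ, hδ, hX⟩ := hqg.exists_isChainGeodesic
  rw [eq_top_iff, coarseEntropyAt]
  refine le_iSup₂_of_le δ hδ (le_iInf₂ fun R hR ↦ ?_)
  have hR' : ¬ HasBoundedGeometryAt R X := fun hb ↦ h (hb.exists_coarseEquiv hR)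
  exact (hX.limsup_log_sepCard_eq_top x₀ hR').ge
end
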